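/- arXiv:1005.1129 — 2 statements merged into one kernel-verified Lean document; each statement's English description precedes it below -/
import Mathlib

section
/- The double integral ∫_0^∞ ∫_0^∞ log(1 + x + y) · (1 + x)^{−2} (1 + y)^{−2} dx dy = π²/6. Consequently, if R_∞ and V_∞ are independent random variables each distributed on [0, ∞) with cdf x/(1 + x), then C_∞ = E[log(1 + R_∞ + V_∞)] = π²/6. -/
/-!
Integrating first in `y`, an explicit primitive gives
`∫₀^∞ log (c + y) / (1 + y)² dy = c log c / (c - 1)` for `c = 1 + x`. The substitution
`u = x / (1 + x)`, whose Jacobian is exactly the remaining weight `(1 + x)⁻²`, turns the outer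
integral into `∫₀¹ -log (1 - u) / u du = ∑ 1 / (n + 1)² = ζ(2) = π² / 6`.

For the probabilistic form, the distribution function determines the common law (density
`(1 + x)⁻²` on `(0, ∞)`), independence makes the joint law the product measure, and Fubini
applies because `log (1 + x + y) ≤ log (1 + x) + log (1 + y)`.
-/

open MeasureTheory ProbabilityTheory Set Real Filter Topology
open scoped NNReal

lemma hasDerivAt_neg_inv_one_add {x : ℝ} (hx : 1 + x ≠ 0) :
    HasDerivAt (fun t => -(1 + t)⁻¹) ((1 + x) ^ 2)⁻¹ x :=
  (((hasDerivAt_id' x).const_add 1).fun_inv hx).fun_neg.congr_deriv (by ring)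

lemma tendsto_neg_inv_one_add_atTop : Tendsto (fun t : ℝ => -(1 + t)⁻¹) atTop (𝓝 0) := by
  simpa using
    (tendsto_inv_atTop_zero.comp (tendsto_atTop_add_const_left _ (1 : ℝ) tendsto_id)).neg

lemma integrableOn_Ioi_inv_sq_one_add : IntegrableOn (fun x : ℝ => ((1 + x) ^ 2)⁻¹) (Ioi 0) :=
  integrableOn_Ioi_deriv_of_nonneg'
    (fun x (hx : 0 ≤ x) => hasDerivAt_neg_inv_one_add (by positivity))
    (fun x _ => by positivity) tendsto_neg_inv_one_add_atTop

lemma integral_Ioi_inv_sq_one_add : ∫ x in Ioi (0 : ℝ), ((1 + x) ^ 2)⁻¹ = 1 := by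
  rw [integral_Ioi_of_hasDerivAt_of_nonneg'
    (fun x (hx : 0 ≤ x) => hasDerivAt_neg_inv_one_add (by positivity))
    (fun x _ => by positivity) tendsto_neg_inv_one_add_atTop]
  norm_num

lemma integral_Ioc_inv_sq_one_add {a : ℝ} (ha : 0 ≤ a) :
    ∫ x in Ioc 0 a, ((1 + x) ^ 2)⁻¹ = a / (1 + a) := by
  rw [← intervalIntegral.integral_of_le ha, intervalIntegral.integral_eq_sub_of_hasDerivAt
    (fun x hx => hasDerivAt_neg_inv_one_add ?_)
    ((intervalIntegrable_iff_integrableOn_Ioc_of_le ha).2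
      (integrableOn_Ioi_inv_sq_one_add.mono_set Ioc_subset_Ioi_self))]
  · field_simp
    ring
  · rw [uIcc_of_le ha] at hx
    linarith [hx.1]

noncomputable def lomaxDensity (x : ℝ) : ℝ≥0 := ⟨((1 + x) ^ 2)⁻¹, by positivity⟩

lemma measurable_lomaxDensity : Measurable lomaxDensity :=
  (by fun_prop : Measurable fun x : ℝ => ((1 + x) ^ 2)⁻¹).subtype_mk

/-- The Lomax law with shape and scale `1`, i.e. `Q_st = Q̃` of the paper. -/
noncomputable def lomaxMeasure : Measure ℝ :=
  (volume.restrict (Ioi 0)).withDensity fun x => lomaxDensity x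

lemma integral_lomaxMeasure (g : ℝ → ℝ) :
    ∫ x, g x ∂lomaxMeasure = ∫ x in Ioi 0, ((1 + x) ^ 2)⁻¹ * g x :=
  integral_withDensity_eq_integral_smul measurable_lomaxDensity g

lemma integrable_lomaxMeasure_iff {g : ℝ → ℝ} :
    Integrable g lomaxMeasure ↔ IntegrableOn (fun x => ((1 + x) ^ 2)⁻¹ * g x) (Ioi 0) :=
  integrable_withDensity_iff_integrable_smul measurable_lomaxDensity

lemma lomaxMeasure_apply {s : Set ℝ} (hs : MeasurableSet s) :
    lomaxMeasure s = ENNReal.ofReal (∫ x in s ∩ Ioi 0, ((1 + x) ^ 2)⁻¹) := by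
  rw [lomaxMeasure, withDensity_apply _ hs, Measure.restrict_restrict hs,
    lintegral_coe_eq_integral]
  · rfl
  · exact integrableOn_Ioi_inv_sq_one_add.mono_set inter_subset_right

instance : IsProbabilityMeasure lomaxMeasure :=
  ⟨by rw [lomaxMeasure_apply .univ, univ_inter, integral_Ioi_inv_sq_one_add, ENNReal.ofReal_one]⟩

lemma ae_pos_lomaxMeasure : ∀ᵐ x ∂lomaxMeasure, 0 < x :=
  (withDensity_absolutelyContinuous _ _).ae_le (ae_restrict_mem measurableSet_Ioi)

lemma lomaxMeasure_Iic {a : ℝ} (ha : 0 ≤ a) :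
    lomaxMeasure (Iic a) = ENNReal.ofReal (a / (1 + a)) := by
  rw [lomaxMeasure_apply measurableSet_Iic, Iic_inter_Ioi, integral_Ioc_inv_sq_one_add ha]

noncomputable def logPrimitive (c y : ℝ) : ℝ :=
  (log (1 + y) - log (c + y)) / (c - 1) - log (c + y) / (1 + y)

lemma hasDerivAt_logPrimitive {c y : ℝ} (hc : c ≠ 1) (hy : 0 < 1 + y) (hcy : 0 < c + y) :
    HasDerivAt (logPrimitive c) (log (c + y) * ((1 + y) ^ 2)⁻¹) y := by
  have hlog {a : ℝ} (ha : 0 < a + y) : HasDerivAt (fun t => log (a + t)) (a + y)⁻¹ y :=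
    ((hasDerivAt_id' y).const_add a).log ha.ne' |>.congr_deriv (one_div _)
  have hc1 : c - 1 ≠ 0 := sub_ne_zero.2 hc
  refine (((hlog hy).sub (hlog hcy)).div_const (c - 1)).sub
    ((hlog hcy).div ((hasDerivAt_id' y).const_add 1) hy.ne') |>.congr_deriv ?_
  field_simp
  ring

lemma tendsto_logPrimitive_atTop (c : ℝ) : Tendsto (logPrimitive c) atTop (𝓝 0) := by
  have h₁ : Tendsto (fun y => log (1 + y) - log (c + y)) atTop (𝓝 0) := by
    have := (tendsto_log_comp_add_sub_log (c - 1)).comp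
      (tendsto_atTop_add_const_left atTop (1 : ℝ) tendsto_id)
    simpa [Function.comp_def, show ∀ y : ℝ, 1 + y + (c - 1) = c + y from fun y => by ring]
      using this.neg
  have h₂ : Tendsto (fun y => log (c + y) / (1 + y)) atTop (𝓝 0) := by
    have := (tendsto_pow_log_div_mul_add_atTop 1 (1 - c) 1 one_ne_zero).comp
      (tendsto_atTop_add_const_left atTop c tendsto_id)
    simpa [Function.comp_def, show ∀ y : ℝ, c + y + (1 - c) = 1 + y from fun y => by ring]
      using this
  have := (h₁.div_const (c - 1)).sub h₂
  rwa [zero_div, sub_zero] at this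

lemma logPrimitive_zero {c : ℝ} (hc : c ≠ 1) : logPrimitive c 0 = -(c * log c / (c - 1)) := by
  have hc1 : c - 1 ≠ 0 := sub_ne_zero.2 hc
  simp only [logPrimitive, add_zero, log_one]
  field_simp
  ring

lemma log_add_mul_inv_sq_one_add_nonneg {c y : ℝ} (hc : 1 ≤ c) (hy : 0 ≤ y) :
    0 ≤ log (c + y) * ((1 + y) ^ 2)⁻¹ :=
  mul_nonneg (log_nonneg (by linarith)) (by positivity)

lemma integrableOn_Ioi_log_add_mul_inv_sq_one_add {c : ℝ} (hc : 1 < c) :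
    IntegrableOn (fun y => log (c + y) * ((1 + y) ^ 2)⁻¹) (Ioi 0) :=
  integrableOn_Ioi_deriv_of_nonneg'
    (fun y (hy : 0 ≤ y) => hasDerivAt_logPrimitive hc.ne' (by positivity) (by positivity))
    (fun y hy => log_add_mul_inv_sq_one_add_nonneg hc.le (le_of_lt hy))
    (tendsto_logPrimitive_atTop c)

lemma integral_Ioi_log_add_mul_inv_sq_one_add {c : ℝ} (hc : 1 < c) :
    ∫ y in Ioi 0, log (c + y) * ((1 + y) ^ 2)⁻¹ = c * log c / (c - 1) := by
  rw [integral_Ioi_of_hasDerivAt_of_nonneg'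
    (fun y (hy : 0 ≤ y) => hasDerivAt_logPrimitive hc.ne' (by positivity) (by positivity))
    (fun y hy => log_add_mul_inv_sq_one_add_nonneg hc.le (le_of_lt hy))
    (tendsto_logPrimitive_atTop c), logPrimitive_zero hc.ne', zero_sub, neg_neg]

lemma hasSum_one_div_nat_add_one_sq :
    HasSum (fun n : ℕ => 1 / ((n : ℝ) + 1) ^ 2) (π ^ 2 / 6) := by
  simpa using (hasSum_nat_add_iff' 1).2 hasSum_zeta_two

lemma integral_Ioo_pow_div (n : ℕ) :
    ∫ u in Ioo (0 : ℝ) 1, u ^ n / ((n : ℝ) + 1) = 1 / ((n : ℝ) + 1) ^ 2 := by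
  rw [← integral_Ioc_eq_integral_Ioo, ← intervalIntegral.integral_of_le zero_le_one,
    intervalIntegral.integral_div, integral_pow]
  field_simp
  simp

lemma integral_Ioo_neg_log_one_sub_div : ∫ u in Ioo (0 : ℝ) 1, -log (1 - u) / u = π ^ 2 / 6 := by
  set F : ℕ → ℝ → ℝ := fun n u => u ^ n / ((n : ℝ) + 1)
  have hF_int (n : ℕ) : IntegrableOn (F n) (Ioo 0 1) :=
    (continuous_pow n |>.div_const _).integrableOn_Icc.mono_set Ioo_subset_Icc_self
  have hF_norm (n : ℕ) : ∫ u in Ioo (0 : ℝ) 1, ‖F n u‖ = 1 / ((n : ℝ) + 1) ^ 2 := by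
    rw [← integral_Ioo_pow_div n]
    exact setIntegral_congr_fun measurableSet_Ioo fun u hu => norm_of_nonneg (by
      have := hu.1.le; positivity)
  have hF_tsum : ∀ u ∈ Ioo (0 : ℝ) 1, ∑' n, F n u = -log (1 - u) / u := by
    intro u ⟨hu₀, hu₁⟩
    have := (hasSum_pow_div_log_of_abs_lt_one (abs_lt.2 ⟨by linarith, hu₁⟩)).div_const u
    refine (this.congr_fun fun n => ?_).tsum_eq
    simp only [F, pow_succ]
    field_simp
  have := hasSum_integral_of_summable_integral_norm hF_int
    (by simpa only [hF_norm] using hasSum_one_div_nat_add_one_sq.summable)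
  rw [← setIntegral_congr_fun measurableSet_Ioo hF_tsum]
  refine this.unique ?_
  simpa only [F, integral_Ioo_pow_div] using hasSum_one_div_nat_add_one_sq

lemma integral_Ioi_smul_comp_div_one_add {E : Type*} [NormedAddCommGroup E] [NormedSpace ℝ E]
    (g : ℝ → E) :
    ∫ x in Ioi (0 : ℝ), ((1 + x) ^ 2)⁻¹ • g (x / (1 + x)) = ∫ u in Ioo (0 : ℝ) 1, g u := by
  have himage : (fun x : ℝ => x / (1 + x)) '' Ioi 0 = Ioo 0 1 := by
    ext u
    constructor
    · rintro ⟨x, hx : 0 < x, rfl⟩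
      exact ⟨by positivity, (div_lt_one (by positivity)).2 (by linarith)⟩
    · rintro ⟨hu₀, hu₁⟩
      have : 1 - u ≠ 0 := by linarith
      refine ⟨u / (1 - u), div_pos hu₀ (by linarith), ?_⟩
      field_simp
      ring
  have hderiv (x : ℝ) (hx : x ∈ Ioi 0) :
      HasDerivWithinAt (fun x : ℝ => x / (1 + x)) ((1 + x) ^ 2)⁻¹ (Ioi 0) x := by
    have hx : 1 + x ≠ 0 := by linarith [mem_Ioi.1 hx]
    exact ((hasDerivAt_id' x).div ((hasDerivAt_id' x).const_add 1) hx).hasDerivWithinAt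
      |>.congr_deriv (by field_simp; ring)
  have hinj : InjOn (fun x : ℝ => x / (1 + x)) (Ioi 0) := by
    intro x (hx : 0 < x) y (hy : 0 < y) h
    field_simp at h
    linarith
  rw [← himage, integral_image_eq_integral_abs_deriv_smul measurableSet_Ioi hderiv hinj]
  exact setIntegral_congr_fun measurableSet_Ioi fun x _ => by rw [abs_of_nonneg (by positivity)]

theorem integral_Ioi_integral_Ioi_log_one_add_add :
    (∫ x in Ioi (0 : ℝ), ∫ y in Ioi (0 : ℝ),
      log (1 + x + y) * ((1 + x) ^ 2)⁻¹ * ((1 + y) ^ 2)⁻¹) = π ^ 2 / 6 := by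
  calc _ = ∫ x in Ioi (0 : ℝ), ((1 + x) ^ 2)⁻¹ • (-log (1 - x / (1 + x)) / (x / (1 + x))) := by
        refine setIntegral_congr_fun measurableSet_Ioi fun x (hx : 0 < x) => ?_
        have hx₀ : x ≠ 0 := hx.ne'
        have h₁ : 1 - x / (1 + x) = (1 + x)⁻¹ := by field_simp; ring
        have h₂ : ∫ y in Ioi (0 : ℝ), log (1 + x + y) * ((1 + x) ^ 2)⁻¹ * ((1 + y) ^ 2)⁻¹ =
            ((1 + x) ^ 2)⁻¹ * ∫ y in Ioi (0 : ℝ), log (1 + x + y) * ((1 + y) ^ 2)⁻¹ := by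
          rw [← integral_const_mul]
          congr 1 with y
          ring
        rw [h₂, integral_Ioi_log_add_mul_inv_sq_one_add (by linarith), add_sub_cancel_left, h₁,
          log_inv, neg_neg, smul_eq_mul]
        field_simp
    _ = ∫ u in Ioo (0 : ℝ) 1, -log (1 - u) / u :=
        integral_Ioi_smul_comp_div_one_add fun u => -log (1 - u) / u
    _ = π ^ 2 / 6 := integral_Ioo_neg_log_one_sub_div

lemma hasLaw_lomaxMeasure {Ω : Type*} [MeasurableSpace Ω] {μ : Measure Ω} [IsFiniteMeasure μ]
    {W : Ω → ℝ} (hW : AEMeasurable W μ) (hW₀ : ∀ᵐ ω ∂μ, 0 ≤ W ω)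
    (hcdf : ∀ x, 0 ≤ x → (μ {ω | W ω ≤ x}).toReal = x / (1 + x)) :
    HasLaw W lomaxMeasure μ where
  aemeasurable := hW
  map_eq := by
    refine Measure.ext_of_Iic _ _ fun a => ?_
    rw [Measure.map_apply_of_aemeasurable hW measurableSet_Iic]
    rcases le_or_gt 0 a with ha | ha
    · rw [lomaxMeasure_Iic ha, ← hcdf a ha, ENNReal.ofReal_toReal (measure_ne_top _ _)]
      rfl
    · have hW : μ (W ⁻¹' Iic a) = 0 :=
        measure_mono_null (fun ω (hω : W ω ≤ a) => not_le.2 (hω.trans_lt ha)) (ae_iff.1 hW₀)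
      have hlomax : lomaxMeasure (Iic a) = 0 :=
        measure_mono_null (fun x (hx : x ≤ a) => not_lt.2 (hx.trans ha.le))
          (ae_iff.1 ae_pos_lomaxMeasure)
      rw [hW, hlomax]

lemma log_one_add_add_le {x y : ℝ} (hx : 0 ≤ x) (hy : 0 ≤ y) :
    log (1 + x + y) ≤ log (1 + x) + log (1 + y) := by
  rw [← log_mul (by positivity) (by positivity)]
  exact log_le_log (by positivity) (by nlinarith)

lemma integrable_log_one_add_add_prod {ν₁ ν₂ : Measure ℝ} [IsFiniteMeasure ν₁]
    [IsFiniteMeasure ν₂] (h₁ : ∀ᵐ x ∂ν₁, 0 ≤ x) (h₂ : ∀ᵐ y ∂ν₂, 0 ≤ y)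
    (hi₁ : Integrable (fun x => log (1 + x)) ν₁) (hi₂ : Integrable (fun y => log (1 + y)) ν₂) :
    Integrable (fun p : ℝ × ℝ => log (1 + p.1 + p.2)) (ν₁.prod ν₂) := by
  refine ((hi₁.comp_fst ν₂).add (hi₂.comp_snd ν₁)).mono'
    (by fun_prop : Measurable fun p : ℝ × ℝ => log (1 + p.1 + p.2)).aestronglyMeasurable ?_
  filter_upwards [Measure.quasiMeasurePreserving_fst.ae h₁,
    Measure.quasiMeasurePreserving_snd.ae h₂] with p hp₁ hp₂
  rw [norm_of_nonneg (log_nonneg (by linarith))]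
  exact log_one_add_add_le hp₁ hp₂

lemma integrable_log_one_add_lomaxMeasure : Integrable (fun x => log (1 + x)) lomaxMeasure := by
  refine integrable_lomaxMeasure_iff.2 <|
    (integrableOn_Ioi_log_add_mul_inv_sq_one_add one_lt_two).mono' (by fun_prop) ?_
  filter_upwards [ae_restrict_mem measurableSet_Ioi] with x (hx : 0 < x)
  rw [norm_of_nonneg (mul_nonneg (by positivity) (log_nonneg (by linarith))), mul_comm]
  gcongr
  linarith

lemma integral_log_one_add_add_of_hasLaw {Ω : Type*} [MeasurableSpace Ω] {μ : Measure Ω}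
    [IsFiniteMeasure μ] {R V : Ω → ℝ} (hR : HasLaw R lomaxMeasure μ)
    (hV : HasLaw V lomaxMeasure μ) (hRV : IndepFun R V μ) :
    ∫ ω, log (1 + R ω + V ω) ∂μ = ∫ x in Ioi (0 : ℝ), ∫ y in Ioi (0 : ℝ),
      log (1 + x + y) * ((1 + x) ^ 2)⁻¹ * ((1 + y) ^ 2)⁻¹ := by
  have hnonneg : ∀ᵐ x ∂lomaxMeasure, 0 ≤ x := ae_pos_lomaxMeasure.mono fun _ => le_of_lt
  calc ∫ ω, log (1 + R ω + V ω) ∂μ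
      = ∫ p, log (1 + p.1 + p.2) ∂(lomaxMeasure.prod lomaxMeasure) :=
        (hRV.hasLaw_prod hR hV).integral_comp (f := fun p : ℝ × ℝ => log (1 + p.1 + p.2))
          (by fun_prop : Measurable fun p : ℝ × ℝ => log (1 + p.1 + p.2)).aestronglyMeasurable
    _ = ∫ x, ∫ y, log (1 + x + y) ∂lomaxMeasure ∂lomaxMeasure :=
        integral_prod _ (integrable_log_one_add_add_prod hnonneg hnonneg
          integrable_log_one_add_lomaxMeasure integrable_log_one_add_lomaxMeasure)
    _ = _ := by
        simp_rw [integral_lomaxMeasure, ← integral_const_mul]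
        refine setIntegral_congr_fun measurableSet_Ioi fun x _ => ?_
        exact setIntegral_congr_fun measurableSet_Ioi fun y _ => by ring

/-- `∫_0^∞ ∫_0^∞ log(1+x+y)(1+x)^{−2}(1+y)^{−2} dx dy = π²/6`; consequently,
if `R_∞` and `V_∞` are independent, each with cdf `x/(1+x)` on `[0,∞)`, then
`C_∞ = E[log(1 + R_∞ + V_∞)] = π²/6`. -/
theorem beta_example_Cinfty :
    (∫ x in Ioi (0 : ℝ), ∫ y in Ioi (0 : ℝ),
        Real.log (1 + x + y) * ((1 + x) ^ 2)⁻¹ * ((1 + y) ^ 2)⁻¹) = π ^ 2 / 6 ∧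
    (∀ (Ω : Type) (_ : MeasurableSpace Ω) (μ : Measure Ω), IsProbabilityMeasure μ →
      ∀ R V : Ω → ℝ, Measurable R → Measurable V → IndepFun R V μ →
      (∀ᵐ ω ∂μ, 0 ≤ R ω) → (∀ᵐ ω ∂μ, 0 ≤ V ω) →
      (∀ x : ℝ, 0 ≤ x → (μ {ω | R ω ≤ x}).toReal = x / (1 + x)) →
      (∀ x : ℝ, 0 ≤ x → (μ {ω | V ω ≤ x}).toReal = x / (1 + x)) →
      ∫ ω, Real.log (1 + R ω + V ω) ∂μ = π ^ 2 / 6) := by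
  refine ⟨integral_Ioi_integral_Ioi_log_one_add_add, ?_⟩
  intro Ω _ μ _ R V hR hV hRV hR₀ hV₀ hRcdf hVcdf
  rw [integral_log_one_add_add_of_hasLaw (hasLaw_lomaxMeasure hR.aemeasurable hR₀ hRcdf)
    (hasLaw_lomaxMeasure hV.aemeasurable hV₀ hVcdf) hRV]
  exact integral_Ioi_integral_Ioi_log_one_add_add
end

section
/- In the beta changepoint example: (i) if X has density f(x) = 2x on [0,1] (the beta(2,1) distribution) and Λ = 1/X − 1, then P(Λ ≤ t) = 1 − (1 + t)^{−2} for every t ≥ 0; (ii) if X has density g(x) = 2(1 − x) on [0,1] (the beta(1,2) distribution) and Λ = 1/X − 1, then P(Λ^{−1} ≤ t) = 1 − (1 + t)^{−2} for every t ≥ 0, so Λ under f and Λ^{−1} under g have the same distribution; (iii) the cumulative distribution function Q(x) = x/(1 + x), x ≥ 0, satisfies the stationary fixed-point equation Q(x) = ∫_0^∞ F_∞( x/(1 + y) ) dQ(y), equivalently Q(x) = 1 − ∫_0^∞ (1 + y)²/(1 + x + y)² dQ(y), where F_∞(t) = 1 − (1 + t)^{−2}; hence x/(1+x) is the stationary distribution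 of the Shiryaev–Roberts recursion R_{n+1} = (1 + R_n)Λ_{n+1} when Λ has cdf F_∞. -/
/-!
On `(0, 1]` the likelihood ratio `1/x - 1` is at most `t` exactly when `x ≥ (1 + t)⁻¹`, and on
`[0, 1)` its inverse `x / (1 - x)` is at most `t` exactly when `x ≤ t / (1 + t)`; integrating the
densities `2x` and `2(1 - x)` over these intervals gives `1 - (1 + t)⁻²` both times.
For the fixed-point equation, `dQ(y) = (1 + y)⁻² dy` and both integrands reduce to the
functions `(c + y)⁻²`, whose integral over `(0, ∞)` is `c⁻¹`.
-/

open MeasureTheory Set Filter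

theorem toReal_measure_preimage_eq_sub_of_hasDerivAt {Ω : Type*} [MeasurableSpace Ω]
    {μ : Measure Ω} {X : Ω → ℝ} (hX : Measurable X) {s S : Set ℝ} {f F : ℝ → ℝ} {a b : ℝ}
    (hmap : μ.map X = (volume.restrict s).withDensity fun x => ENNReal.ofReal (f x))
    (hS : MeasurableSet S) (hSs : S ∩ s = Icc a b) (hab : a ≤ b)
    (hF : ∀ x ∈ Icc a b, HasDerivAt F (f x) x) (hf : ∀ x ∈ Icc a b, 0 ≤ f x) :
    (μ (X ⁻¹' S)).toReal = F b - F a := by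
  have hcont : ContinuousOn F (Icc a b) := fun x hx => (hF x hx).continuousAt.continuousWithinAt
  have hint : IntegrableOn f (Ioc a b) := intervalIntegral.integrableOn_deriv_of_nonneg hcont
    (fun x hx => hF x (Ioo_subset_Icc_self hx)) (fun x hx => hf x (Ioo_subset_Icc_self hx))
  have hf_nonneg : ∀ x ∈ Ioc a b, 0 ≤ f x := fun x hx => hf x (Ioc_subset_Icc_self hx)
  have hFTC : ∫ x in Ioc a b, f x = F b - F a := by
    rw [← intervalIntegral.integral_of_le hab]
    exact intervalIntegral.integral_eq_sub_of_hasDerivAt_of_le hab hcont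
      (fun x hx => hF x (Ioo_subset_Icc_self hx))
      ((intervalIntegrable_iff_integrableOn_Ioc_of_le hab).2 hint)
  rw [← Measure.map_apply hX hS, hmap, withDensity_apply _ hS, Measure.restrict_restrict hS, hSs,
    ← Measure.restrict_congr_set Ioc_ae_eq_Icc,
    ← ofReal_integral_eq_lintegral_ofReal hint
      ((ae_restrict_iff' measurableSet_Ioc).2 (.of_forall hf_nonneg)),
    ENNReal.toReal_ofReal (setIntegral_nonneg measurableSet_Ioc hf_nonneg), hFTC]

theorem setOf_one_div_sub_one_le_inter_Ioc {t : ℝ} (ht : -1 < t) :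
    {x : ℝ | 1 / x - 1 ≤ t} ∩ Ioc 0 1 = Icc (1 + t)⁻¹ 1 := by
  have h1t : 0 < 1 + t := by linarith
  ext x
  simp only [mem_inter_iff, mem_ofPred_eq, mem_Ioc, mem_Icc, one_div, sub_le_iff_le_add']
  constructor
  · rintro ⟨hle, hx, hx1⟩
    exact ⟨(inv_le_comm₀ hx h1t).1 hle, hx1⟩
  · rintro ⟨hle, hx1⟩
    have hx : 0 < x := (inv_pos.2 h1t).trans_le hle
    exact ⟨(inv_le_comm₀ hx h1t).2 hle, hx, hx1⟩

theorem setOf_inv_one_div_sub_one_le_inter_Ico {t : ℝ} (ht : 0 ≤ t) :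
    {x : ℝ | (1 / x - 1)⁻¹ ≤ t} ∩ Ico 0 1 = Icc 0 (t / (1 + t)) := by
  have h1t : 0 < 1 + t := by linarith
  have hle_iff : ∀ x, 0 < x → x < 1 → ((1 / x - 1)⁻¹ ≤ t ↔ x ≤ t / (1 + t)) := fun x hx hx1 => by
    rw [div_sub_one hx.ne', inv_div, div_le_iff₀ (sub_pos.2 hx1), le_div_iff₀ h1t]
    constructor <;> intro h <;> linarith
  ext x
  simp only [mem_inter_iff, mem_ofPred_eq, mem_Ico, mem_Icc]
  constructor
  · rintro ⟨hle, hx0, hx1⟩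
    rcases hx0.eq_or_lt with rfl | hx
    · exact ⟨le_rfl, by positivity⟩
    · exact ⟨hx0, (hle_iff x hx hx1).1 hle⟩
  · rintro ⟨hx0, hle⟩
    have hx1 : x < 1 := hle.trans_lt ((div_lt_one h1t).2 (by linarith))
    rcases hx0.eq_or_lt with rfl | hx
    · exact ⟨by norm_num; linarith, le_rfl, hx1⟩
    · exact ⟨(hle_iff x hx hx1).2 hle, hx0, hx1⟩

theorem toReal_measure_one_div_sub_one_le_of_map_eq {Ω : Type*} [MeasurableSpace Ω]
    {μ : Measure Ω} {X : Ω → ℝ} (hX : Measurable X)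
    (hmap : μ.map X =
      (volume.restrict (Icc (0 : ℝ) 1)).withDensity fun x => ENNReal.ofReal (2 * x))
    {t : ℝ} (ht : 0 ≤ t) :
    (μ {ω | 1 / X ω - 1 ≤ t}).toReal = 1 - ((1 + t) ^ 2)⁻¹ := by
  -- discard the null point `0`, where `1 / 0 - 1 = -1` would put it in every event
  rw [← Measure.restrict_congr_set Ioc_ae_eq_Icc] at hmap
  have hpos : 0 < (1 + t)⁻¹ := by positivity
  refine (toReal_measure_preimage_eq_sub_of_hasDerivAt (F := fun x => x ^ 2) hX hmap
    (measurableSet_le (by fun_prop) measurable_const)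
    (setOf_one_div_sub_one_le_inter_Ioc (by linarith)) (inv_le_one_of_one_le₀ (by linarith))
    (fun x _ => by simpa [mul_comm] using hasDerivAt_pow 2 x)
    (fun x hx => by linarith [hpos.trans_le hx.1])).trans ?_
  simp [inv_pow]

theorem toReal_measure_inv_one_div_sub_one_le_of_map_eq {Ω : Type*} [MeasurableSpace Ω]
    {μ : Measure Ω} {X : Ω → ℝ} (hX : Measurable X)
    (hmap : μ.map X =
      (volume.restrict (Icc (0 : ℝ) 1)).withDensity fun x => ENNReal.ofReal (2 * (1 - x)))
    {t : ℝ} (ht : 0 ≤ t) :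
    (μ {ω | (1 / X ω - 1)⁻¹ ≤ t}).toReal = 1 - ((1 + t) ^ 2)⁻¹ := by
  -- discard the null point `1`, where `(1 / 1 - 1)⁻¹ = 0⁻¹ = 0` would put it in every event
  rw [← Measure.restrict_congr_set Ico_ae_eq_Icc] at hmap
  have h1t : 0 < 1 + t := by linarith
  have hs1 : t / (1 + t) ≤ 1 := (div_le_one h1t).2 (by linarith)
  refine (toReal_measure_preimage_eq_sub_of_hasDerivAt (F := fun x => -(1 - x) ^ 2) hX hmap
    (measurableSet_le (by fun_prop) measurable_const)
    (setOf_inv_one_div_sub_one_le_inter_Ico ht) (by positivity)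
    (fun x _ => by simpa [mul_comm] using (((hasDerivAt_id' x).const_sub 1).fun_pow 2).fun_neg)
    (fun x hx => by linarith [hx.2])).trans ?_
  field_simp
  ring

theorem integral_Ioi_inv_add_sq {c : ℝ} (hc : 0 < c) :
    ∫ y in Ioi 0, ((c + y) ^ 2)⁻¹ = c⁻¹ := by
  have hderiv : ∀ y ∈ Ici (0 : ℝ), HasDerivAt (fun y => -(c + y)⁻¹) ((c + y) ^ 2)⁻¹ y := by
    intro y hy
    have hcy : c + y ≠ 0 := by have : (0 : ℝ) ≤ y := hy; positivity
    have h := (((hasDerivAt_id' y).const_add c).inv hcy).fun_neg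
    rwa [neg_div, neg_neg, one_div] at h
  have hlim : Tendsto (fun y => -(c + y)⁻¹) atTop (nhds 0) := by
    simpa using (tendsto_inv_atTop_zero.comp (tendsto_atTop_add_const_left _ c tendsto_id)).neg
  simpa using integral_Ioi_of_hasDerivAt_of_nonneg' hderiv (fun y _ => by positivity) hlim

theorem div_one_add_eq_setIntegral_Ioi {x : ℝ} (hx : 0 ≤ x) :
    x / (1 + x) = ∫ y in Ioi (0 : ℝ), (1 - ((1 + x / (1 + y)) ^ 2)⁻¹) * ((1 + y) ^ 2)⁻¹ := by
  have hx1 : 0 < 1 + x := by linarith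
  have hintegrand : ∀ y ∈ Ioi (0 : ℝ), (1 - ((1 + x / (1 + y)) ^ 2)⁻¹) * ((1 + y) ^ 2)⁻¹
      = ((1 + y) ^ 2)⁻¹ - ((1 + x + y) ^ 2)⁻¹ := fun y (hy : 0 < y) => by
    have : 0 < 1 + y := by linarith
    have : 0 < 1 + x + y := by linarith
    field_simp
    ring
  have hint : ∀ {c : ℝ}, 0 < c → IntegrableOn (fun y => ((c + y) ^ 2)⁻¹) (Ioi 0) := fun hc =>
    .of_integral_ne_zero (by rw [integral_Ioi_inv_add_sq hc]; positivity)
  rw [setIntegral_congr_fun measurableSet_Ioi hintegrand, integral_sub (hint one_pos) (hint hx1),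
    integral_Ioi_inv_add_sq one_pos, integral_Ioi_inv_add_sq hx1]
  field_simp
  ring

theorem div_one_add_eq_one_sub_setIntegral_Ioi {x : ℝ} (hx : 0 ≤ x) :
    x / (1 + x) = 1 - ∫ y in Ioi (0 : ℝ), ((1 + y) ^ 2 / (1 + x + y) ^ 2) * ((1 + y) ^ 2)⁻¹ := by
  have hx1 : 0 < 1 + x := by linarith
  have hintegrand : ∀ y ∈ Ioi (0 : ℝ),
      ((1 + y) ^ 2 / (1 + x + y) ^ 2) * ((1 + y) ^ 2)⁻¹ = ((1 + x + y) ^ 2)⁻¹ :=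
      fun y (hy : 0 < y) => by
    have : 0 < 1 + y := by linarith
    field_simp
  rw [setIntegral_congr_fun measurableSet_Ioi hintegrand, integral_Ioi_inv_add_sq hx1]
  field_simp
  ring

/-- **Statement 19** (beta changepoint example): (i) if `X ~ beta(2,1)` (density `2x` on
`[0,1]`) and `Λ = 1/X − 1`, then `P(Λ ≤ t) = 1 − (1+t)^{−2}` for `t ≥ 0`; (ii) if
`X ~ beta(1,2)` (density `2(1−x)` on `[0,1]`), then `P(Λ^{−1} ≤ t) = 1 − (1+t)^{−2}` for
`t ≥ 0`, so `Λ` under `f` and `Λ^{−1}` under `g` have the same distribution; (iii) the cdf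
`Q(x) = x/(1+x)` satisfies the stationary fixed-point equation of the Shiryaev–Roberts
recursion `R_{n+1} = (1 + R_n)Λ_{n+1}`, in both equivalent forms. -/
theorem beta_example_distributions :
    (∀ (Ω : Type) (_ : MeasurableSpace Ω) (μ : Measure Ω), IsProbabilityMeasure μ →
      ∀ X : Ω → ℝ, Measurable X →
      Measure.map X μ =
        (volume.restrict (Icc (0 : ℝ) 1)).withDensity (fun x => ENNReal.ofReal (2 * x)) →
      ∀ t : ℝ, 0 ≤ t →
        (μ {ω | 1 / X ω - 1 ≤ t}).toReal = 1 - ((1 + t) ^ 2)⁻¹) ∧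
    (∀ (Ω : Type) (_ : MeasurableSpace Ω) (μ : Measure Ω), IsProbabilityMeasure μ →
      ∀ X : Ω → ℝ, Measurable X →
      Measure.map X μ =
        (volume.restrict (Icc (0 : ℝ) 1)).withDensity (fun x => ENNReal.ofReal (2 * (1 - x))) →
      ∀ t : ℝ, 0 ≤ t →
        (μ {ω | (1 / X ω - 1)⁻¹ ≤ t}).toReal = 1 - ((1 + t) ^ 2)⁻¹) ∧
    (∀ x : ℝ, 0 ≤ x →
      x / (1 + x) =
        ∫ y in Ioi (0 : ℝ), (1 - ((1 + x / (1 + y)) ^ 2)⁻¹) * ((1 + y) ^ 2)⁻¹ ∧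
      x / (1 + x) =
        1 - ∫ y in Ioi (0 : ℝ), ((1 + y) ^ 2 / (1 + x + y) ^ 2) * ((1 + y) ^ 2)⁻¹) :=
  ⟨fun _ _ _ _ _ hX hmap _ ht => toReal_measure_one_div_sub_one_le_of_map_eq hX hmap ht,
    fun _ _ _ _ _ hX hmap _ ht => toReal_measure_inv_one_div_sub_one_le_of_map_eq hX hmap ht,
    fun _ hx => ⟨div_one_add_eq_setIntegral_Ioi hx, div_one_add_eq_one_sub_setIntegral_Ioi hx⟩⟩
end
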